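/- arXiv:1402.2324 — 2 statements merged into one kernel-verified Lean document; each statement's English description precedes it below -/
import Mathlib

section
/- Let n, d, r be positive integers and C > 0. Let Ω ⊆ {1,…,n}×{1,…,n} be the edge set of a d-regular bipartite graph whose biadjacency matrix G satisfies G1 and G2 with constant C. Let M ∈ ℝ^{n×n} be a rank-r matrix whose thin SVD M = UΣVᵀ satisfies the μ₀-incoherence assumption A1. Then ‖(n/d)·P_Ω(M) − M‖ ≤ (C·μ₀·r/√d)·‖M‖, where ‖·‖ denotes the spectral norm. -/
open Matrix
open scoped BigOperators

noncomputable section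

/-- Euclidean norm of a vector. -/
def vecNorm {β : Type*} [Fintype β] (x : β → ℝ) : ℝ :=
  Real.sqrt (∑ i, x i ^ 2)

/-- Spectral norm (largest singular value) of a real matrix. -/
def specNorm {α β : Type*} [Fintype α] [Fintype β] (A : Matrix α β ℝ) : ℝ :=
  sSup {c | ∃ x : β → ℝ, vecNorm x ≤ 1 ∧ c = vecNorm (A.mulVec x)}

/-- Second largest singular value of a real matrix (Courant–Fischer characterization). -/
def sigma2 {α β : Type*} [Fintype α] [Fintype β] (A : Matrix α β ℝ) : ℝ :=
  ⨅ v : β → ℝ, sSup {c | ∃ x : β → ℝ,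
    vecNorm x ≤ 1 ∧ (∑ i, v i * x i) = 0 ∧ c = vecNorm (A.mulVec x)}

/-- Frobenius norm. -/
def frobNorm {α β : Type*} [Fintype α] [Fintype β] (A : Matrix α β ℝ) : ℝ :=
  Real.sqrt (∑ i, ∑ j, A i j ^ 2)

/-- Nuclear norm: the sum of the singular values, i.e. the trace of `√(AᵀA)`. -/
def nuclearNorm {α β : Type*} [Fintype α] [Fintype β] [DecidableEq β]
    (A : Matrix α β ℝ) : ℝ :=
  ((Matrix.posSemidef_conjTranspose_mul_self A).1.eigenvectorUnitary.1 *
    Matrix.diagonal ((RCLike.ofReal : ℝ → ℝ) ∘ (Real.sqrt ·) ∘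
      (Matrix.posSemidef_conjTranspose_mul_self A).1.eigenvalues) *
    (star (Matrix.posSemidef_conjTranspose_mul_self A).1.eigenvectorUnitary :
      Matrix β β ℝ)).trace

/-- The sampling operator `P_Ω`. -/
def sampl {n : ℕ} (Ω : Finset (Fin n × Fin n)) (M : Matrix (Fin n) (Fin n) ℝ) :
    Matrix (Fin n) (Fin n) ℝ :=
  Matrix.of fun i j => if (i, j) ∈ Ω then M i j else 0

/-- The biadjacency matrix `G` of the bipartite graph with edge set `Ω`. -/
def biadj {n : ℕ} (Ω : Finset (Fin n × Fin n)) : Matrix (Fin n) (Fin n) ℝ :=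
  Matrix.of fun i j => if (i, j) ∈ Ω then (1 : ℝ) else 0

/-- `Ω` is the edge set of a `d`-regular bipartite graph: every row and every column
of `G` has exactly `d` ones. -/
def RegularSampling {n : ℕ} (Ω : Finset (Fin n × Fin n)) (d : ℕ) : Prop :=
  (∀ i : Fin n, (Finset.univ.filter fun j => (i, j) ∈ Ω).card = d) ∧
  (∀ j : Fin n, (Finset.univ.filter fun i => (i, j) ∈ Ω).card = d)

/-- Assumption G1: the all-ones vector is a top left- and right-singular vector of `G`,
with `σ₁(G) = d`. -/
def AssumptionG1 {n : ℕ} (Ω : Finset (Fin n × Fin n)) (d : ℕ) : Prop :=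
  specNorm (biadj Ω) = d ∧
  (biadj Ω).mulVec (fun _ => 1) = (fun _ => (d : ℝ)) ∧
  Matrix.vecMul (fun _ => 1) (biadj Ω) = (fun _ => (d : ℝ))

/-- Assumption G2: `σ₂(G) ≤ C·√d`. -/
def AssumptionG2 {n : ℕ} (Ω : Finset (Fin n × Fin n)) (d : ℕ) (C : ℝ) : Prop :=
  sigma2 (biadj Ω) ≤ C * Real.sqrt d

/-- Assumption A1 (`μ₀`-incoherence) for one factor: every row `U^i` satisfies
`‖U^i‖² ≤ μ₀ r / n`. -/
def IncoherentRows {n r : ℕ} (U : Matrix (Fin n) (Fin r) ℝ) (μ₀ : ℝ) : Prop :=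
  ∀ i : Fin n, (∑ k, U i k ^ 2) ≤ μ₀ * r / n

/-- Assumption A2 (strong incoherence with parameter `δ`) for one factor:
for every `S` with `|S| = d`, `‖(n/d)·∑_{k∈S} U^k (U^k)ᵀ − I‖ ≤ δ`. -/
def StrongIncoherence {n r : ℕ} (U : Matrix (Fin n) (Fin r) ℝ) (d : ℕ) (δ : ℝ) : Prop :=
  ∀ S : Finset (Fin n), S.card = d →
    specNorm (((n : ℝ) / (d : ℝ)) • (∑ k ∈ S, Matrix.vecMulVec (U k) (U k)) - 1) ≤ δ

/-- `M = U · diagonal s · Vᵀ` is a thin SVD of the rank-`r` matrix `M`. -/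
def IsThinSVD {n r : ℕ} (M : Matrix (Fin n) (Fin n) ℝ)
    (U : Matrix (Fin n) (Fin r) ℝ) (s : Fin r → ℝ) (V : Matrix (Fin n) (Fin r) ℝ) : Prop :=
  Uᵀ * U = 1 ∧ Vᵀ * V = 1 ∧ (∀ i, 0 < s i) ∧ M = U * Matrix.diagonal s * Vᵀ

/-- The projection `P_T` onto the subspace `T` spanned by matrices `UXᵀ` and `YVᵀ`. -/
def projT {n r : ℕ} (U V : Matrix (Fin n) (Fin r) ℝ) (Z : Matrix (Fin n) (Fin n) ℝ) :
    Matrix (Fin n) (Fin n) ℝ :=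
  U * Uᵀ * Z + Z * (V * Vᵀ) - U * Uᵀ * Z * (V * Vᵀ)

/-- The projection `P_{T⊥}` onto the orthogonal complement of `T`. -/
def projTperp {n r : ℕ} (U V : Matrix (Fin n) (Fin r) ℝ) (Z : Matrix (Fin n) (Fin n) ℝ) :
    Matrix (Fin n) (Fin n) ℝ :=
  (1 - U * Uᵀ) * Z * (1 - V * Vᵀ)

end

/-!
Write `J` for the all-ones matrix and `E = (n/d)·G - J`, so that `(n/d)·P_Ω(M) - M = E ⊙ M`.

Since `G 𝟙 = d 𝟙` and `𝟙ᵀ G = d 𝟙ᵀ`, subtracting the mean gives `E x = (n/d)·G (x - x̄ 𝟙)` with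
`x - x̄ 𝟙 ⊥ 𝟙`, and on `𝟙⊥` the gain of `G` is at most `σ₂(G)`: a hyperplane `v⊥` meets the plane
spanned by `𝟙` and `z ⊥ 𝟙` in a vector that `G` stretches at least as much as `z`. Hence
`‖E‖ ≤ (n/d)·σ₂(G) ≤ (n/d)·C√d`.

For `M = ∑ₖ sₖ uₖ vₖᵀ`, `yᵀ (E ⊙ M) x = ∑ₖ sₖ (y ⊙ uₖ)ᵀ E (x ⊙ vₖ)`. Bounding each term by
`‖M‖·‖E‖·‖y ⊙ uₖ‖·‖x ⊙ vₖ‖` and applying Cauchy–Schwarz over `k`, incoherence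
`∑ₖ U_{ik}² ≤ μ₀r/n` gives `‖E ⊙ M‖ ≤ ‖M‖·(μ₀r/n)·‖E‖`.
-/

open scoped Matrix.Norms.L2Operator RealInnerProductSpace

section EuclideanNorms

variable {α β : Type*} [Fintype α] [Fintype β]

lemma vecNorm_eq_norm (x : β → ℝ) : vecNorm x = ‖WithLp.toLp 2 x‖ := by
  simp [vecNorm, EuclideanSpace.norm_eq]

lemma dotProduct_eq_inner (x y : β → ℝ) : x ⬝ᵥ y = ⟪WithLp.toLp 2 x, WithLp.toLp 2 y⟫ := by
  simp [EuclideanSpace.inner_toLp_toLp, dotProduct_comm]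

lemma vecNorm_nonneg (x : β → ℝ) : 0 ≤ vecNorm x := Real.sqrt_nonneg _

lemma vecNorm_sq_eq_dotProduct (x : β → ℝ) : vecNorm x ^ 2 = x ⬝ᵥ x := by
  rw [vecNorm_eq_norm, dotProduct_eq_inner, real_inner_self_eq_norm_sq]

lemma vecNorm_sq_eq_sum (x : β → ℝ) : vecNorm x ^ 2 = ∑ i, x i ^ 2 :=
  Real.sq_sqrt (Finset.sum_nonneg fun _ _ => sq_nonneg _)

lemma abs_dotProduct_le (x y : β → ℝ) : |x ⬝ᵥ y| ≤ vecNorm x * vecNorm y := by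
  rw [dotProduct_eq_inner, vecNorm_eq_norm, vecNorm_eq_norm]
  exact abs_real_inner_le_norm _ _

lemma vecNorm_smul (c : ℝ) (x : β → ℝ) : vecNorm (c • x) = |c| * vecNorm x := by
  rw [vecNorm_eq_norm, vecNorm_eq_norm, WithLp.toLp_smul, norm_smul, Real.norm_eq_abs]

lemma specNorm_eq_l2_opNorm [DecidableEq β] (A : Matrix α β ℝ) : specNorm A = ‖A‖ := by
  rw [Matrix.l2_opNorm_def, ← ContinuousLinearMap.sSup_unitClosedBall_eq_norm, specNorm]
  congr 1
  ext c
  constructor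
  · rintro ⟨x, hx, rfl⟩
    refine ⟨WithLp.toLp 2 x, by simpa [← vecNorm_eq_norm] using hx, ?_⟩
    simp [vecNorm_eq_norm]
  · rintro ⟨x, hx, rfl⟩
    exact ⟨WithLp.ofLp x, by simpa [vecNorm_eq_norm] using hx, by rw [vecNorm_eq_norm]; rfl⟩

lemma specNorm_nonneg (A : Matrix α β ℝ) : 0 ≤ specNorm A := by
  classical
  exact (specNorm_eq_l2_opNorm A).symm ▸ norm_nonneg A

lemma vecNorm_mulVec_le (A : Matrix α β ℝ) (x : β → ℝ) :
    vecNorm (A *ᵥ x) ≤ specNorm A * vecNorm x := by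
  classical
  rw [specNorm_eq_l2_opNorm, vecNorm_eq_norm, vecNorm_eq_norm]
  exact A.l2_opNorm_mulVec (WithLp.toLp 2 x)

lemma specNorm_le_bound {A : Matrix α β ℝ} {c : ℝ} (hc : 0 ≤ c)
    (h : ∀ x, vecNorm (A *ᵥ x) ≤ c * vecNorm x) : specNorm A ≤ c := by
  classical
  rw [specNorm_eq_l2_opNorm, Matrix.l2_opNorm_def]
  refine ContinuousLinearMap.opNorm_le_bound _ hc fun x => ?_
  have hx := h (WithLp.ofLp x)
  rwa [vecNorm_eq_norm, vecNorm_eq_norm] at hx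

lemma specNorm_le_of_abs_dotProduct_le {A : Matrix α β ℝ} {c : ℝ} (hc : 0 ≤ c)
    (h : ∀ x y, |y ⬝ᵥ A *ᵥ x| ≤ c * vecNorm y * vecNorm x) : specNorm A ≤ c := by
  refine specNorm_le_bound hc fun x => ?_
  have hsq : vecNorm (A *ᵥ x) ^ 2 ≤ c * vecNorm (A *ᵥ x) * vecNorm x := by
    rw [vecNorm_sq_eq_dotProduct]
    exact (le_abs_self _).trans (h x _)
  nlinarith [vecNorm_nonneg (A *ᵥ x), mul_nonneg hc (vecNorm_nonneg x)]

end EuclideanNorms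

section Hadamard

variable {m n r : Type*} [Fintype m] [Fintype n] [Fintype r]

lemma sum_vecNorm_mul_col_sq_le {U : Matrix m r ℝ} {K : ℝ} (hU : ∀ i, ∑ k, U i k ^ 2 ≤ K)
    (y : m → ℝ) : ∑ k, vecNorm (fun i => y i * U i k) ^ 2 ≤ K * vecNorm y ^ 2 := by
  simp_rw [vecNorm_sq_eq_sum, mul_pow, Finset.mul_sum]
  rw [Finset.sum_comm]
  refine Finset.sum_le_sum fun i _ => ?_
  rw [← Finset.mul_sum, mul_comm]
  exact mul_le_mul_of_nonneg_right (hU i) (sq_nonneg _)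

variable [DecidableEq r]

lemma dotProduct_hadamard_mulVec (E : Matrix m n ℝ) (U : Matrix m r ℝ) (s : r → ℝ)
    (V : Matrix n r ℝ) (x : n → ℝ) (y : m → ℝ) :
    y ⬝ᵥ (E ⊙ (U * diagonal s * Vᵀ)) *ᵥ x =
      ∑ k, s k * ((fun i => y i * U i k) ⬝ᵥ E *ᵥ fun j => V j k * x j) := by
  simp only [dotProduct, mulVec, hadamard, mul_apply, diagonal_apply, transpose_apply, of_apply,
    mul_ite, mul_zero, Finset.sum_ite_eq', Finset.mem_univ, if_true, Finset.mul_sum,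
    Finset.sum_mul]
  conv_rhs => rw [Finset.sum_comm]
  refine Finset.sum_congr rfl fun i _ => ?_
  rw [Finset.sum_comm]
  exact Finset.sum_congr rfl fun j _ => Finset.sum_congr rfl fun k _ => by ring

lemma specNorm_hadamard_le (E : Matrix m n ℝ) (U : Matrix m r ℝ) (s : r → ℝ)
    (V : Matrix n r ℝ) {σ K : ℝ} (hσ : 0 ≤ σ) (hs : ∀ k, |s k| ≤ σ) (hK : 0 ≤ K)
    (hU : ∀ i, ∑ k, U i k ^ 2 ≤ K) (hV : ∀ j, ∑ k, V j k ^ 2 ≤ K) :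
    specNorm (E ⊙ (U * diagonal s * Vᵀ)) ≤ σ * K * specNorm E := by
  have hE := specNorm_nonneg E
  refine specNorm_le_of_abs_dotProduct_le (by positivity) fun x y => ?_
  set a : r → ℝ := fun k => vecNorm fun i => y i * U i k
  set b : r → ℝ := fun k => vecNorm fun j => V j k * x j
  have hab : ∑ k, a k * b k ≤ K * vecNorm y * vecNorm x := by
    have hb : ∑ k, b k ^ 2 ≤ K * vecNorm x ^ 2 := by
      simpa only [b, mul_comm (V _ _)] using sum_vecNorm_mul_col_sq_le hV x
    refine (sq_le_sq₀ (Finset.sum_nonneg fun k _ => mul_nonneg (vecNorm_nonneg _)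
      (vecNorm_nonneg _)) (by positivity [vecNorm_nonneg x, vecNorm_nonneg y])).1 ?_
    calc (∑ k, a k * b k) ^ 2 ≤ (∑ k, a k ^ 2) * ∑ k, b k ^ 2 :=
          Finset.sum_mul_sq_le_sq_mul_sq _ _ _
      _ ≤ (K * vecNorm y ^ 2) * (K * vecNorm x ^ 2) :=
          mul_le_mul (sum_vecNorm_mul_col_sq_le hU y) hb
            (Finset.sum_nonneg fun _ _ => sq_nonneg _) (by positivity)
      _ = (K * vecNorm y * vecNorm x) ^ 2 := by ring
  have hterm : ∀ k, |s k * ((fun i => y i * U i k) ⬝ᵥ E *ᵥ fun j => V j k * x j)|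
      ≤ σ * specNorm E * (a k * b k) := fun k => by
    rw [abs_mul]
    calc |s k| * |_| ≤ σ * (a k * (specNorm E * b k)) :=
          mul_le_mul (hs k) ((abs_dotProduct_le _ _).trans
            (mul_le_mul_of_nonneg_left (vecNorm_mulVec_le _ _) (vecNorm_nonneg _)))
            (abs_nonneg _) hσ
      _ = σ * specNorm E * (a k * b k) := by ring
  calc |y ⬝ᵥ (E ⊙ (U * diagonal s * Vᵀ)) *ᵥ x|
      ≤ ∑ k, σ * specNorm E * (a k * b k) := by
        rw [dotProduct_hadamard_mulVec]
        exact (Finset.abs_sum_le_sum_abs _ _).trans (Finset.sum_le_sum fun k _ => hterm k)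
    _ = σ * specNorm E * ∑ k, a k * b k := by rw [Finset.mul_sum]
    _ ≤ σ * specNorm E * (K * vecNorm y * vecNorm x) :=
        mul_le_mul_of_nonneg_left hab (by positivity)
    _ = σ * K * specNorm E * vecNorm y * vecNorm x := by ring

end Hadamard

section SVD

variable {m n r : Type*} [Fintype m] [Fintype n] [Fintype r] [DecidableEq r]

lemma vecNorm_mulVec_of_transpose_mul_eq_one {U : Matrix m r ℝ} (hU : Uᵀ * U = 1) (x : r → ℝ) :
    vecNorm (U *ᵥ x) = vecNorm x := by
  refine (sq_eq_sq₀ (vecNorm_nonneg _) (vecNorm_nonneg _)).1 ?_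
  rw [vecNorm_sq_eq_dotProduct, vecNorm_sq_eq_dotProduct, dotProduct_mulVec, ← mulVec_transpose,
    mulVec_mulVec, hU, one_mulVec]

lemma vecNorm_single_one (k : r) : vecNorm (Pi.single k (1 : ℝ)) = 1 := by
  simp [vecNorm, Pi.single_apply]

lemma abs_le_specNorm_mul_diagonal_mul {U : Matrix m r ℝ} {V : Matrix n r ℝ} (s : r → ℝ)
    (hU : Uᵀ * U = 1) (hV : Vᵀ * V = 1) (k : r) : |s k| ≤ specNorm (U * diagonal s * Vᵀ) := by
  set M := U * diagonal s * Vᵀ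
  have hMv : M *ᵥ (V *ᵥ Pi.single k 1) = s k • U *ᵥ Pi.single k 1 := by
    rw [mulVec_mulVec, Matrix.mul_assoc, hV, Matrix.mul_one, ← mulVec_mulVec,
      ← mulVec_smul, diagonal_mulVec_single, ← smul_eq_mul, Pi.single_smul]
  calc |s k| = vecNorm (M *ᵥ (V *ᵥ Pi.single k 1)) := by
        rw [hMv, vecNorm_smul, vecNorm_mulVec_of_transpose_mul_eq_one hU, vecNorm_single_one,
          mul_one]
    _ ≤ specNorm M * vecNorm (V *ᵥ Pi.single k 1) := vecNorm_mulVec_le _ _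
    _ = specNorm M := by
        rw [vecNorm_mulVec_of_transpose_mul_eq_one hV, vecNorm_single_one, mul_one]

end SVD

section CourantFischer

variable {E F : Type*} [NormedAddCommGroup E] [InnerProductSpace ℝ E]
  [NormedAddCommGroup F] [InnerProductSpace ℝ F]

lemma norm_inv_norm_smul_self {x : E} (hx : 0 < ‖x‖) : ‖‖x‖⁻¹ • x‖ = 1 := by
  rw [norm_smul, norm_inv, norm_norm, inv_mul_cancel₀ hx.ne']

/-- The planar case of Courant–Fischer: `x` is the normalization of `⟪v, u⟫ • y - ⟪v, y⟫ • u`,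
and `‖T x‖²` is a convex combination of `‖T y‖²` and `‖T u‖²`. -/
lemma exists_norm_eq_one_inner_eq_zero_le_norm_apply (T : E →ₗ[ℝ] F) {u y : E}
    (hu : ‖u‖ = 1) (hy : ‖y‖ = 1) (huy : ⟪u, y⟫ = 0) (hTuy : ⟪T u, T y⟫ = 0)
    (hTyu : ‖T y‖ ≤ ‖T u‖) (v : E) : ∃ x, ‖x‖ = 1 ∧ ⟪v, x⟫ = 0 ∧ ‖T y‖ ≤ ‖T x‖ := by
  set p := ⟪v, u⟫
  set q := ⟪v, y⟫
  by_cases hpq : p = 0 ∧ q = 0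
  · exact ⟨y, hy, hpq.2, le_rfl⟩
  set w := p • y - q • u
  have hw : ‖w‖ ^ 2 = p ^ 2 + q ^ 2 := by
    simp only [w, norm_sub_sq_real, norm_smul, real_inner_smul_left, real_inner_smul_right,
      real_inner_comm u y, huy, hu, hy, Real.norm_eq_abs, mul_pow, sq_abs]
    ring
  have hTw : ‖T w‖ ^ 2 = p ^ 2 * ‖T y‖ ^ 2 + q ^ 2 * ‖T u‖ ^ 2 := by
    simp only [w, map_sub, map_smul, norm_sub_sq_real, norm_smul, real_inner_smul_left,
      real_inner_smul_right, real_inner_comm (T u) (T y), hTuy, Real.norm_eq_abs, mul_pow, sq_abs]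
    ring
  have hw0 : 0 < ‖w‖ := by
    have : 0 < ‖w‖ ^ 2 := by
      rw [hw]
      rcases not_and_or.1 hpq with h | h
      · exact add_pos_of_pos_of_nonneg (pow_two_pos_of_ne_zero h) (sq_nonneg q)
      · exact add_pos_of_nonneg_of_pos (sq_nonneg p) (pow_two_pos_of_ne_zero h)
    nlinarith [norm_nonneg w]
  refine ⟨‖w‖⁻¹ • w, norm_inv_norm_smul_self hw0, ?_, ?_⟩
  · simp only [w, real_inner_smul_right, inner_sub_right, p, q]
    ring
  · rw [map_smul, norm_smul, norm_inv, norm_norm, le_inv_mul_iff₀ hw0]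
    refine (sq_le_sq₀ (by positivity) (norm_nonneg _)).1 ?_
    rw [mul_pow, hw, hTw]
    nlinarith [pow_le_pow_left₀ (norm_nonneg _) hTyu 2, sq_nonneg q]

end CourantFischer

section Sigma2

variable {α β : Type*} [Fintype α] [Fintype β]

lemma bddAbove_sigma2_set (A : Matrix α β ℝ) (v : β → ℝ) :
    BddAbove {c | ∃ x : β → ℝ, vecNorm x ≤ 1 ∧ (∑ i, v i * x i) = 0 ∧ c = vecNorm (A *ᵥ x)} := by
  refine ⟨specNorm A, ?_⟩
  rintro c ⟨x, hx, -, rfl⟩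
  exact (vecNorm_mulVec_le A x).trans (mul_le_of_le_one_right (specNorm_nonneg A) hx)

lemma sigma2_nonneg (A : Matrix α β ℝ) : 0 ≤ sigma2 A :=
  Real.iInf_nonneg fun v => (vecNorm_nonneg _).trans
    (le_csSup (bddAbove_sigma2_set A v) ⟨0, by simp [vecNorm], by simp, rfl⟩)

lemma le_sigma2 {A : Matrix α β ℝ} {c : ℝ}
    (h : ∀ v : β → ℝ, ∃ x, vecNorm x ≤ 1 ∧ ∑ i, v i * x i = 0 ∧ c ≤ vecNorm (A *ᵥ x)) :
    c ≤ sigma2 A :=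
  le_ciInf fun v => by
    obtain ⟨x, hx, hvx, hc⟩ := h v
    exact hc.trans (le_csSup (bddAbove_sigma2_set A v) ⟨x, hx, hvx, rfl⟩)

variable [DecidableEq β]

lemma norm_toEuclideanLin_le_sigma2_mul (A : Matrix α β ℝ) {u y : EuclideanSpace ℝ β}
    (hu : u ≠ 0) (huy : ⟪u, y⟫ = 0) (hAuy : ⟪toEuclideanLin A u, toEuclideanLin A y⟫ = 0)
    (hAyu : ‖toEuclideanLin A y‖ * ‖u‖ ≤ ‖toEuclideanLin A u‖ * ‖y‖) :
    ‖toEuclideanLin A y‖ ≤ sigma2 A * ‖y‖ := by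
  rcases eq_or_ne y 0 with rfl | hy
  · simp
  have hu0 := norm_pos_iff.2 hu
  have hy0 := norm_pos_iff.2 hy
  set T := toEuclideanLin A
  have huy' : ⟪‖u‖⁻¹ • u, ‖y‖⁻¹ • y⟫ = 0 := by
    rw [real_inner_smul_left, real_inner_smul_right, huy, mul_zero, mul_zero]
  have hAuy' : ⟪T (‖u‖⁻¹ • u), T (‖y‖⁻¹ • y)⟫ = 0 := by
    rw [map_smul, map_smul, real_inner_smul_left, real_inner_smul_right, hAuy, mul_zero,
      mul_zero]
  have hAyu' : ‖T (‖y‖⁻¹ • y)‖ ≤ ‖T (‖u‖⁻¹ • u)‖ := by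
    simp only [map_smul, norm_smul, norm_inv, norm_norm]
    rw [inv_mul_le_iff₀ hy0, ← mul_assoc, mul_comm ‖y‖, mul_assoc, le_inv_mul_iff₀ hu0]
    linarith
  rw [mul_comm, ← inv_mul_le_iff₀ hy0]
  refine le_sigma2 fun v => ?_
  obtain ⟨x, hx, hvx, hAx⟩ := exists_norm_eq_one_inner_eq_zero_le_norm_apply T
    (norm_inv_norm_smul_self hu0) (norm_inv_norm_smul_self hy0) huy' hAuy' hAyu' (WithLp.toLp 2 v)
  refine ⟨WithLp.ofLp x, by rw [vecNorm_eq_norm, WithLp.toLp_ofLp, hx], ?_, ?_⟩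
  · rw [← hvx, ← dotProduct_eq_inner]
    rfl
  · rw [vecNorm_eq_norm]
    refine le_trans (le_of_eq ?_) hAx
    rw [map_smul, norm_smul, norm_inv, norm_norm]

end Sigma2

section RegularBipartite

variable {ι : Type*} [Fintype ι]

lemma sum_sub_mean_eq_zero (x : ι → ℝ) :
    ∑ i, (x i - (∑ j, x j) / Fintype.card ι) = 0 := by
  rcases isEmpty_or_nonempty ι with hι | hι
  · simp
  rw [Finset.sum_sub_distrib, Finset.sum_const, Finset.card_univ, nsmul_eq_mul,
    mul_div_cancel₀ _ (by positivity), sub_self]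

lemma vecNorm_sub_mean_le (x : ι → ℝ) :
    vecNorm (fun i => x i - (∑ j, x j) / Fintype.card ι) ≤ vecNorm x := by
  set α := (∑ j, x j) / Fintype.card ι
  set z := fun i => x i - α
  have hz : z ⬝ᵥ (fun _ => 1) = 0 := by
    simp only [dotProduct, mul_one]
    exact sum_sub_mean_eq_zero x
  have h1 : (0 : ℝ) ≤ (fun _ => 1) ⬝ᵥ fun _ : ι => 1 := by simp [dotProduct]
  have hx : x = z + α • fun _ => 1 := by ext; simp [z]
  refine (sq_le_sq₀ (vecNorm_nonneg _) (vecNorm_nonneg _)).1 ?_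
  rw [vecNorm_sq_eq_dotProduct, vecNorm_sq_eq_dotProduct, hx, add_dotProduct, dotProduct_add,
    dotProduct_add, smul_dotProduct, dotProduct_smul, dotProduct_smul,
    dotProduct_comm (fun _ => 1) z, hz, smul_dotProduct]
  simp only [smul_eq_mul, mul_zero, add_zero, le_add_iff_nonneg_right]
  rw [← mul_assoc]
  exact mul_nonneg (mul_self_nonneg α) h1

lemma vecNorm_mulVec_le_sigma2_mul [DecidableEq ι] [Nonempty ι] {G : Matrix ι ι ℝ} {d : ℝ}
    (hG : specNorm G ≤ d) (hrow : G *ᵥ (fun _ => 1) = fun _ => d)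
    (hcol : vecMul (fun _ => 1) G = fun _ => d) {z : ι → ℝ} (hz : ∑ i, z i = 0) :
    vecNorm (G *ᵥ z) ≤ sigma2 G * vecNorm z := by
  have hone : WithLp.toLp 2 (fun _ : ι => (1 : ℝ)) ≠ 0 := fun h => by
    simpa using congrArg (fun w => w.ofLp (Classical.arbitrary ι)) h
  have hd : (fun _ : ι => d) = d • fun _ => (1 : ℝ) := by ext; simp
  have hdot : (fun _ => 1) ⬝ᵥ z = 0 := by simpa [dotProduct] using hz
  have hGdot : (G *ᵥ fun _ => 1) ⬝ᵥ G *ᵥ z = 0 := by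
    rw [hrow, dotProduct_mulVec, hd, smul_vecMul, hcol, hd, smul_dotProduct, smul_dotProduct,
      hdot, smul_zero, smul_zero]
  have hbound : vecNorm (G *ᵥ z) * vecNorm (fun _ : ι => (1 : ℝ)) ≤
      vecNorm (G *ᵥ fun _ => 1) * vecNorm z := by
    rw [hrow, hd, vecNorm_smul, mul_right_comm]
    exact mul_le_mul_of_nonneg_right ((vecNorm_mulVec_le G z).trans (mul_le_mul_of_nonneg_right
      (hG.trans (le_abs_self d)) (vecNorm_nonneg z))) (vecNorm_nonneg _)
  simp only [vecNorm_eq_norm, dotProduct_eq_inner] at hdot hGdot hbound ⊢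
  exact norm_toEuclideanLin_le_sigma2_mul G hone hdot hGdot hbound

lemma smul_sub_ones_mulVec_eq [Nonempty ι] {G : Matrix ι ι ℝ} {d : ℝ} (hd : d ≠ 0)
    (hrow : G *ᵥ (fun _ => 1) = fun _ => d) (x : ι → ℝ) :
    ((Fintype.card ι / d) • G - of fun _ _ => 1) *ᵥ x =
      (Fintype.card ι / d) • G *ᵥ fun i => x i - (∑ j, x j) / Fintype.card ι := by
  have hrow' : ∀ i, ∑ j, G i j = d := fun i => by simpa [mulVec, dotProduct] using congrFun hrow i
  ext i
  simp only [mulVec, dotProduct, Matrix.sub_apply, Matrix.smul_apply, of_apply, Pi.smul_apply,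
    smul_eq_mul, sub_mul, mul_sub, one_mul, mul_assoc, Finset.sum_sub_distrib, ← Finset.mul_sum,
    ← Finset.sum_mul, hrow']
  field_simp

lemma specNorm_smul_sub_ones_le [DecidableEq ι] [Nonempty ι] {G : Matrix ι ι ℝ} {d : ℝ}
    (hd : d ≠ 0) (hG : specNorm G ≤ d) (hrow : G *ᵥ (fun _ => 1) = fun _ => d)
    (hcol : vecMul (fun _ => 1) G = fun _ => d) :
    specNorm ((Fintype.card ι / d) • G - of fun _ _ => 1) ≤ Fintype.card ι / d * sigma2 G := by
  have hd0 : 0 < d := lt_of_le_of_ne ((specNorm_nonneg G).trans hG) hd.symm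
  have hσ := sigma2_nonneg G
  refine specNorm_le_bound (by positivity) fun x => ?_
  rw [smul_sub_ones_mulVec_eq hd hrow, vecNorm_smul, abs_of_pos (by positivity), mul_assoc]
  gcongr
  exact (vecNorm_mulVec_le_sigma2_mul hG hrow hcol (sum_sub_mean_eq_zero x)).trans
    (mul_le_mul_of_nonneg_left (vecNorm_sub_mean_le x) hσ)

end RegularBipartite

lemma smul_sampl_sub_eq_hadamard {n : ℕ} (Ω : Finset (Fin n × Fin n)) (c : ℝ)
    (M : Matrix (Fin n) (Fin n) ℝ) :
    c • sampl Ω M - M = (c • biadj Ω - of fun _ _ => 1) ⊙ M := by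
  ext i j
  by_cases h : (i, j) ∈ Ω <;> simp [sampl, biadj, hadamard, h, sub_mul]

theorem stmt_0_general {n d r : ℕ} (hn : 0 < n) (hd : 0 < d) {C μ₀ : ℝ}
    (Ω : Finset (Fin n × Fin n))
    (hG1 : AssumptionG1 Ω d) (hG2 : AssumptionG2 Ω d C)
    (M : Matrix (Fin n) (Fin n) ℝ) (U V : Matrix (Fin n) (Fin r) ℝ) (s : Fin r → ℝ)
    (hSVD : IsThinSVD M U s V)
    (hA1U : IncoherentRows U μ₀) (hA1V : IncoherentRows V μ₀) :
    specNorm (((n : ℝ) / (d : ℝ)) • sampl Ω M - M) ≤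
      C * μ₀ * r / Real.sqrt d * specNorm M := by
  obtain ⟨hU, hV, -, rfl⟩ := hSVD
  obtain ⟨hspec, hrow, hcol⟩ := hG1
  have : Nonempty (Fin n) := ⟨⟨0, hn⟩⟩
  have hd0 : (0 : ℝ) < d := by exact_mod_cast hd
  have hK : 0 ≤ μ₀ * r / n := (Finset.sum_nonneg fun _ _ => sq_nonneg _).trans (hA1U ⟨0, hn⟩)
  have hE := specNorm_smul_sub_ones_le hd0.ne' hspec.le hrow hcol
  rw [Fintype.card_fin] at hE
  set M := U * diagonal s * Vᵀ
  rw [smul_sampl_sub_eq_hadamard]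
  calc _ ≤ specNorm M * (μ₀ * r / n) * specNorm ((n / d : ℝ) • biadj Ω - of fun _ _ => 1) :=
        specNorm_hadamard_le _ U s V (specNorm_nonneg M)
          (abs_le_specNorm_mul_diagonal_mul s hU hV) hK hA1U hA1V
    _ ≤ specNorm M * (μ₀ * r / n) * (n / d * (C * √d)) :=
        mul_le_mul_of_nonneg_left (hE.trans (mul_le_mul_of_nonneg_left hG2 (by positivity)))
          (mul_nonneg (specNorm_nonneg M) hK)
    _ = C * μ₀ * r / √d * specNorm M := by
        have hsd : √(d : ℝ) ^ 2 = d := Real.sq_sqrt hd0.le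
        field_simp
        rw [hsd]
        ring

/-- spectral-norm approximation of `M` by `(n/d)·P_Ω(M)`. -/
theorem stmt_0 {n d r : ℕ} (hn : 0 < n) (hd : 0 < d) (hr : 0 < r) {C μ₀ : ℝ} (hC : 0 < C)
    (Ω : Finset (Fin n × Fin n)) (hreg : RegularSampling Ω d)
    (hG1 : AssumptionG1 Ω d) (hG2 : AssumptionG2 Ω d C)
    (M : Matrix (Fin n) (Fin n) ℝ) (U V : Matrix (Fin n) (Fin r) ℝ) (s : Fin r → ℝ)
    (hSVD : IsThinSVD M U s V) (hrank : M.rank = r)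
    (hA1U : IncoherentRows U μ₀) (hA1V : IncoherentRows V μ₀) :
    specNorm (((n : ℝ) / (d : ℝ)) • sampl Ω M - M) ≤
      C * μ₀ * r / Real.sqrt d * specNorm M :=
  stmt_0_general hn hd Ω hG1 hG2 M U V s hSVD hA1U hA1V
end

section
/- Let U ∈ ℝ^{n×r} have orthonormal columns and satisfy ‖U^l‖² ≤ μ₀r/n for every row l. Fix an index i and let û = U·U^i ∈ ℝ^n, i.e., û_l = ⟨U^i, U^l⟩ for each l. Then ∑_{k=1}^r ‖û.U_k‖² ≤ (μ₀r/n)², where U_k is the k-th column of U and û.U_k denotes the Hadamard (entrywise) product, (û.U_k)_l = û_l·U_{lk}. -/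
/-! Since `U` has orthonormal columns, `û = U U^i` has `‖û‖² = ‖U^i‖² ≤ μ₀r/n`. Exchanging the
sums, `∑_k ‖û.U_k‖² = ∑_l û_l² ‖U^l‖²`, and each `‖U^l‖² ≤ μ₀r/n`. -/

open Matrix
open scoped BigOperators

namespace Matrix

variable {m p : Type*} [Fintype m] [Fintype p]

theorem sum_sq_mulVec_of_transpose_mul_self_eq_one [DecidableEq p] (U : Matrix m p ℝ)
    (hU : Uᵀ * U = 1) (x : p → ℝ) : ∑ l, (U *ᵥ x) l ^ 2 = ∑ k, x k ^ 2 := by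
  have h : (U *ᵥ x) ⬝ᵥ (U *ᵥ x) = x ⬝ᵥ x := by
    rw [dotProduct_mulVec, ← mulVec_transpose, mulVec_mulVec, hU, one_mulVec, dotProduct_comm]
  simpa only [dotProduct, sq] using h

theorem sum_sum_sq_mul_le_of_row_sq_le (u : m → ℝ) (U : Matrix m p ℝ) {c : ℝ}
    (hrow : ∀ l, ∑ k, U l k ^ 2 ≤ c) :
    ∑ k, ∑ l, (u l * U l k) ^ 2 ≤ (∑ l, u l ^ 2) * c := by
  calc ∑ k, ∑ l, (u l * U l k) ^ 2
      = ∑ l, u l ^ 2 * ∑ k, U l k ^ 2 := by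
        rw [Finset.sum_comm]
        simp only [mul_pow, Finset.mul_sum]
    _ ≤ ∑ l, u l ^ 2 * c := by gcongr with l; exact hrow l
    _ = (∑ l, u l ^ 2) * c := (Finset.sum_mul _ _ _).symm

end Matrix

/-- `∑_k ‖û.U_k‖² ≤ (μ₀ r / n)²` where `û = U·U^i`. -/
theorem stmt_15 {n r : ℕ} {μ₀ : ℝ} (U : Matrix (Fin n) (Fin r) ℝ) (hU : Uᵀ * U = 1)
    (hinc : ∀ l : Fin n, (∑ k, U l k ^ 2) ≤ μ₀ * r / n) (i : Fin n) :
    (∑ k : Fin r, ∑ l : Fin n, ((∑ m, U i m * U l m) * U l k) ^ 2) ≤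
      (μ₀ * r / n) ^ 2 := by
  set c : ℝ := μ₀ * r / n
  have hc : 0 ≤ c := (Finset.sum_nonneg fun k _ => sq_nonneg (U i k)).trans (hinc i)
  have hû : (fun l => ∑ m, U i m * U l m) = U *ᵥ U i := by
    ext l
    simp only [mulVec, dotProduct, mul_comm]
  calc (∑ k, ∑ l, ((∑ m, U i m * U l m) * U l k) ^ 2)
      ≤ (∑ l, (U *ᵥ U i) l ^ 2) * c := by
        rw [← hû]
        exact sum_sum_sq_mul_le_of_row_sq_le _ U hinc
    _ = (∑ k, U i k ^ 2) * c := by rw [sum_sq_mulVec_of_transpose_mul_self_eq_one U hU]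
    _ ≤ c * c := mul_le_mul_of_nonneg_right (hinc i) hc
    _ = c ^ 2 := (sq c).symm
end
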